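/- arXiv:2403.01660 — 2 statements merged into one kernel-verified Lean document; each statement's English description precedes it below -/
import Mathlib

section
/- Let P = (X,Y,η,ℓ,H) be a problem and P' = (X,Y,η',ℓ,H) a problem with the same components except possibly the joint law η'. If ℓ is bounded above by ℓ_max, then the Risk distance satisfies d_R(P,P') ≤ ℓ_max · d_TV(η,η'). -/
open MeasureTheory
open scoped ENNReal NNReal

/-- `eabs a b = |a - b|` for extended nonnegative reals. -/
noncomputable def eabs (a b : ℝ≥0∞) : ℝ≥0∞ := (a - b) ⊔ (b - a)

/-- The conditions on the data `(η, ℓ, H)` of a supervised learning problem: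
`η` is a probability measure (the joint law), the loss `ℓ` is measurable, and the
predictors in `H` are measurable with finite risk. -/
def IsProblem {X Y : Type*} [MeasurableSpace X] [MeasurableSpace Y]
    (η : Measure (X × Y)) (ℓ : Y → Y → ℝ≥0) (H : Set (X → Y)) : Prop :=
  IsProbabilityMeasure η ∧ Measurable (Function.uncurry ℓ) ∧
    (∀ h ∈ H, Measurable h) ∧
    ∀ h ∈ H, ∫⁻ z, (ℓ (h z.1) z.2 : ℝ≥0∞) ∂η < ⊤

/-- The Risk distance between the problems `(η, ℓ, H)` on `X × Y` and `(η', ℓ', H')` on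
`X' × Y'`: the infimum, over couplings `γ` of `η` and `η'` and correspondences `R`
between `H` and `H'`, of the risk distortion
`sup_{(h,h') ∈ R} ∫ |ℓ(h(x),y) - ℓ'(h'(x'),y')| dγ`. -/
noncomputable def riskDist {X Y X' Y' : Type*} [MeasurableSpace X] [MeasurableSpace Y]
    [MeasurableSpace X'] [MeasurableSpace Y']
    (η : Measure (X × Y)) (ℓ : Y → Y → ℝ≥0) (H : Set (X → Y))
    (η' : Measure (X' × Y')) (ℓ' : Y' → Y' → ℝ≥0) (H' : Set (X' → Y')) : ℝ≥0∞ :=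
  ⨅ (γ : Measure ((X × Y) × (X' × Y')))
      (_ : γ.map Prod.fst = η ∧ γ.map Prod.snd = η'),
    ⨅ (R : Set ((X → Y) × (X' → Y')))
        (_ : (∀ p ∈ R, p.1 ∈ H ∧ p.2 ∈ H') ∧ (∀ h ∈ H, ∃ h' ∈ H', (h, h') ∈ R) ∧
          ∀ h' ∈ H', ∃ h ∈ H, (h, h') ∈ R),
      ⨆ p ∈ R, ∫⁻ z, eabs (ℓ (p.1 z.1.1) z.1.2) (ℓ' (p.2 z.2.1) z.2.2) ∂γ

/-!
Write `η = μ + ρ` and `η' = μ + ρ'` with common part `μ = η ⊓ η'`: if `f`, `g` are the densities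
of `η`, `η'` with respect to `η + η'`, take the densities `f ⊓ g`, `f - g`, `g - f`. Then `ρ univ = ρ' univ = η S - η' S` for `S = {g < f}`, which is
at most the total variation distance. The maximal coupling puts `μ` on the diagonal and
`(ρ univ)⁻¹ • ρ ⊗ ρ'` off it. Pairing each predictor with itself, the integrand
`|ℓ(h x, y) - ℓ(h x', y')|` vanishes on the diagonal and is at most `ℓmax` elsewhere, so the
risk distortion is at most `ℓmax * ρ univ`.
-/

lemma inf_add_tsub {α : Type*} [AddCommMonoid α] [LinearOrder α] [CanonicallyOrderedAdd α]
    [Sub α] [OrderedSub α] (a b : α) : a ⊓ b + (a - b) = a := by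
  rcases le_total a b with hab | hba
  · rw [inf_eq_left.2 hab, tsub_eq_zero_of_le hab, add_zero]
  · rw [inf_eq_right.2 hba, add_tsub_cancel_of_le hba]

lemma eabs_self (a : ℝ≥0∞) : eabs a a = 0 := by simp [eabs]

lemma eabs_le {a b c : ℝ≥0∞} (ha : a ≤ c) (hb : b ≤ c) : eabs a b ≤ c :=
  sup_le (tsub_le_self.trans ha) (tsub_le_self.trans hb)

section Decomposition

variable {α : Type*} [MeasurableSpace α]

lemma withDensity_inf_add_withDensity_tsub (ξ : Measure α) {f g : α → ℝ≥0∞}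
    (hf : Measurable f) (hg : Measurable g) :
    ξ.withDensity (f ⊓ g) + ξ.withDensity (f - g) = ξ.withDensity f := by
  rw [← withDensity_add_left (hf.inf hg)]
  exact congrArg ξ.withDensity (funext fun z => inf_add_tsub (f z) (g z))

lemma withDensity_tsub_univ_le_iSup_eabs (ξ : Measure α) {f g : α → ℝ≥0∞}
    (hf : Measurable f) (hg : Measurable g) [IsFiniteMeasure (ξ.withDensity g)] :
    ξ.withDensity (f - g) Set.univ ≤
      ⨆ (B : Set α) (_ : MeasurableSet B), eabs (ξ.withDensity f B) (ξ.withDensity g B) := by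
  set S := {z | g z < f z}
  have hS : MeasurableSet S := measurableSet_lt hg hf
  have h_compl : ξ.withDensity (f - g) Sᶜ = 0 := by
    rw [withDensity_apply _ hS.compl]
    refine setLIntegral_eq_zero hS.compl fun z hz => ?_
    exact tsub_eq_zero_of_le (not_lt.mp hz)
  have h_univ : ξ.withDensity (f - g) Set.univ = ξ.withDensity (f - g) S := by
    rw [← measure_add_measure_compl hS, h_compl, add_zero]
  have h_split : ξ.withDensity f S = ξ.withDensity g S + ξ.withDensity (f - g) S := by
    rw [← Measure.add_apply, ← withDensity_add_left hg, withDensity_apply _ hS,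
      withDensity_apply _ hS]
    refine setLIntegral_congr_fun hS fun z hz => ?_
    exact (add_tsub_cancel_of_le (le_of_lt hz)).symm
  calc ξ.withDensity (f - g) Set.univ
      = ξ.withDensity f S - ξ.withDensity g S := by
        rw [h_univ, h_split, ENNReal.add_sub_cancel_left (measure_ne_top _ S)]
    _ ≤ eabs (ξ.withDensity f S) (ξ.withDensity g S) := le_sup_left
    _ ≤ _ := le_iSup₂_of_le S hS le_rfl

theorem exists_add_eq_add_eq_measure_univ_le_iSup_eabs (η η' : Measure α)
    [IsFiniteMeasure η] [IsFiniteMeasure η'] (h_univ : η Set.univ = η' Set.univ) :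
    ∃ μ ρ ρ' : Measure α, μ + ρ = η ∧ μ + ρ' = η' ∧ ρ Set.univ = ρ' Set.univ ∧
      ρ Set.univ ≤ ⨆ (B : Set α) (_ : MeasurableSet B), eabs (η B) (η' B) := by
  set ξ := η + η'
  set f := η.rnDeriv ξ
  set g := η'.rnDeriv ξ
  have hf : Measurable f := Measure.measurable_rnDeriv _ _
  have hg : Measurable g := Measure.measurable_rnDeriv _ _
  have hηf : ξ.withDensity f = η :=
    Measure.withDensity_rnDeriv_eq _ _ (Measure.le_add_right le_rfl).absolutelyContinuous
  have hη'g : ξ.withDensity g = η' :=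
    Measure.withDensity_rnDeriv_eq _ _ (Measure.le_add_left le_rfl).absolutelyContinuous
  have hη : ξ.withDensity (f ⊓ g) + ξ.withDensity (f - g) = η :=
    hηf ▸ withDensity_inf_add_withDensity_tsub ξ hf hg
  have hη' : ξ.withDensity (f ⊓ g) + ξ.withDensity (g - f) = η' := by
    rw [inf_comm, ← hη'g]; exact withDensity_inf_add_withDensity_tsub ξ hg hf
  refine ⟨_, _, _, hη, hη', ?_, ?_⟩
  · have : IsFiniteMeasure (ξ.withDensity (f ⊓ g)) :=
      isFiniteMeasure_of_le η (hη ▸ Measure.le_add_right le_rfl)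
    rw [← ENNReal.add_right_inj (measure_ne_top (ξ.withDensity (f ⊓ g)) Set.univ),
      ← Measure.add_apply, ← Measure.add_apply, hη, hη', h_univ]
  · have : IsFiniteMeasure (ξ.withDensity g) := hη'g ▸ inferInstance
    simpa only [hηf, hη'g] using withDensity_tsub_univ_le_iSup_eabs ξ hf hg

end Decomposition

section MaximalCoupling

variable {α : Type*} [MeasurableSpace α]

noncomputable def maximalCoupling (μ ρ ρ' : Measure α) : Measure (α × α) :=
  μ.map Function.diag + (ρ Set.univ)⁻¹ • ρ.prod ρ'

lemma inv_smul_smul_measure_univ (ρ : Measure α) [IsFiniteMeasure ρ] :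
    (ρ Set.univ)⁻¹ • ρ Set.univ • ρ = ρ := by
  rcases eq_or_ne (ρ Set.univ) 0 with h | h
  · rw [Measure.measure_univ_eq_zero.mp h]; simp
  · rw [smul_smul, ENNReal.inv_mul_cancel h (measure_ne_top ρ _), one_smul]

variable (μ ρ ρ' : Measure α)

lemma map_fst_maximalCoupling [IsFiniteMeasure ρ] [IsFiniteMeasure ρ']
    (h : ρ Set.univ = ρ' Set.univ) :
    (maximalCoupling μ ρ ρ').map Prod.fst = μ + ρ := by
  rw [maximalCoupling, Measure.map_add _ _ measurable_fst, Measure.map_smul,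
    Measure.map_map measurable_fst measurable_diag, Measure.map_fst_prod,
    ← h, inv_smul_smul_measure_univ, Function.fst_comp_diag, Measure.map_id]

lemma map_snd_maximalCoupling [IsFiniteMeasure ρ] [IsFiniteMeasure ρ']
    (h : ρ Set.univ = ρ' Set.univ) :
    (maximalCoupling μ ρ ρ').map Prod.snd = μ + ρ' := by
  rw [maximalCoupling, Measure.map_add _ _ measurable_snd, Measure.map_smul,
    Measure.map_map measurable_snd measurable_diag, Measure.map_snd_prod,
    h, inv_smul_smul_measure_univ, Function.snd_comp_diag, Measure.map_id]

lemma lintegral_maximalCoupling_le [IsFiniteMeasure ρ] [IsFiniteMeasure ρ']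
    (h : ρ Set.univ = ρ' Set.univ) {F : α × α → ℝ≥0∞} {K : ℝ≥0∞}
    (hF_diag : ∀ z, F (z, z) = 0) (hF_le : ∀ p, F p ≤ K) :
    ∫⁻ p, F p ∂maximalCoupling μ ρ ρ' ≤ K * ρ Set.univ := by
  set c := ρ Set.univ
  have h_diag : ∫⁻ p, F p ∂μ.map Function.diag = 0 :=
    le_antisymm ((lintegral_map_le F _).trans (by simp [Function.diag, hF_diag])) zero_le
  have h_prod : ∫⁻ p, F p ∂ρ.prod ρ' ≤ K * (c * c) := by
    calc ∫⁻ p, F p ∂ρ.prod ρ' ≤ ∫⁻ _, K ∂ρ.prod ρ' := lintegral_mono hF_le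
      _ = K * (c * c) := by
        rw [lintegral_const, ← Set.univ_prod_univ, Measure.prod_prod, ← h]
  rw [maximalCoupling, lintegral_add_measure, h_diag, zero_add, lintegral_smul_measure]
  rcases eq_or_ne c 0 with hc | hc
  · simp [c, Measure.measure_univ_eq_zero.mp hc]
  calc c⁻¹ * ∫⁻ p, F p ∂ρ.prod ρ' ≤ c⁻¹ * (K * (c * c)) := by gcongr
    _ = K * c := by
      rw [mul_left_comm, ← mul_assoc c⁻¹, ENNReal.inv_mul_cancel hc (measure_ne_top ρ _),
        one_mul]

end MaximalCoupling

lemma riskDist_le_iSup_lintegral_of_map_eq {X Y : Type*} [MeasurableSpace X]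
    [MeasurableSpace Y] (η η' : Measure (X × Y)) (ℓ : Y → Y → ℝ≥0) (H : Set (X → Y))
    (γ : Measure ((X × Y) × (X × Y))) (hγ₁ : γ.map Prod.fst = η) (hγ₂ : γ.map Prod.snd = η') :
    riskDist η ℓ H η' ℓ H ≤
      ⨆ h ∈ H, ∫⁻ z, eabs (ℓ (h z.1.1) z.1.2) (ℓ (h z.2.1) z.2.2) ∂γ := by
  have hR : (∀ p ∈ Function.diag '' H, p.1 ∈ H ∧ p.2 ∈ H) ∧
      (∀ h ∈ H, ∃ h' ∈ H, (h, h') ∈ Function.diag '' H) ∧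
      ∀ h' ∈ H, ∃ h ∈ H, (h, h') ∈ Function.diag '' H :=
    ⟨fun _ ⟨_, hh, hp⟩ => hp ▸ ⟨hh, hh⟩, fun h hh => ⟨h, hh, h, hh, rfl⟩,
      fun h hh => ⟨h, hh, h, hh, rfl⟩⟩
  refine (iInf₂_le γ ⟨hγ₁, hγ₂⟩).trans <| (iInf₂_le (Function.diag '' H) hR).trans <| iSup₂_le ?_
  rintro _ ⟨h, hh, rfl⟩
  exact le_iSup₂ (f := fun h (_ : h ∈ H) =>
    ∫⁻ z, eabs (ℓ (h z.1.1) z.1.2) (ℓ (h z.2.1) z.2.2) ∂γ) h hh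

theorem riskDist_le_mul_totalVariation_general {X Y : Type*}
    [MeasurableSpace X] [MeasurableSpace Y]
    (η η' : Measure (X × Y)) (ℓ : Y → Y → ℝ≥0) (H : Set (X → Y))
    (hP : IsProblem η ℓ H) (hP' : IsProblem η' ℓ H)
    (ℓmax : ℝ≥0) (hbound : ∀ y y', ℓ y y' ≤ ℓmax) :
    riskDist η ℓ H η' ℓ H ≤
      (ℓmax : ℝ≥0∞) *
        ⨆ (B : Set (X × Y)) (_ : MeasurableSet B), eabs (η B) (η' B) := by
  have := hP.1
  have := hP'.1
  obtain ⟨μ, ρ, ρ', hη, hη', hρρ', hρ_le⟩ :=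
    exists_add_eq_add_eq_measure_univ_le_iSup_eabs η η' (by simp)
  have : IsFiniteMeasure ρ := isFiniteMeasure_of_le η (hη ▸ Measure.le_add_left le_rfl)
  have : IsFiniteMeasure ρ' := isFiniteMeasure_of_le η' (hη' ▸ Measure.le_add_left le_rfl)
  have hℓ : ∀ y y', (ℓ y y' : ℝ≥0∞) ≤ ℓmax := fun y y' => ENNReal.coe_le_coe.2 (hbound y y')
  calc riskDist η ℓ H η' ℓ H
      ≤ ⨆ h ∈ H, ∫⁻ z, eabs (ℓ (h z.1.1) z.1.2) (ℓ (h z.2.1) z.2.2) ∂maximalCoupling μ ρ ρ' :=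
        riskDist_le_iSup_lintegral_of_map_eq η η' ℓ H _
          (hη ▸ map_fst_maximalCoupling μ ρ ρ' hρρ')
          (hη' ▸ map_snd_maximalCoupling μ ρ ρ' hρρ')
    _ ≤ ℓmax * ρ Set.univ := iSup₂_le fun h _ =>
        lintegral_maximalCoupling_le μ ρ ρ' hρρ' (fun _ => eabs_self _)
          (fun _ => eabs_le (hℓ _ _) (hℓ _ _))
    _ ≤ _ := by gcongr

/-- Stability under change of joint law with bounded loss: if `P = (X,Y,η,ℓ,H)` and
`P' = (X,Y,η',ℓ,H)` share all components except possibly the joint law, and the loss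
is bounded above by `ℓmax`, then `d_R(P,P') ≤ ℓmax · d_TV(η,η')`. -/
theorem riskDist_le_mul_totalVariation {X Y : Type*}
    [MeasurableSpace X] [TopologicalSpace X] [PolishSpace X] [BorelSpace X]
    [MeasurableSpace Y] [TopologicalSpace Y] [PolishSpace Y] [BorelSpace Y]
    (η η' : Measure (X × Y)) (ℓ : Y → Y → ℝ≥0) (H : Set (X → Y))
    (hP : IsProblem η ℓ H) (hP' : IsProblem η' ℓ H)
    (ℓmax : ℝ≥0) (hbound : ∀ y y', ℓ y y' ≤ ℓmax) :
    riskDist η ℓ H η' ℓ H ≤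
      (ℓmax : ℝ≥0∞) *
        ⨆ (B : Set (X × Y)) (_ : MeasurableSet B), eabs (η B) (η' B) :=
  riskDist_le_mul_totalVariation_general η η' ℓ H hP hP' ℓmax hbound
end

section
/- Let P = (X,Y,η,ℓ,H) be a problem and P' = (X,Y,η,ℓ,H') a problem differing only in its predictor set. Define the pseudometric d_{ℓ,η}(h,h') := ∫|ℓ(h(x),y) − ℓ(h'(x),y)| η(dx×dy). Then d_R(P,P') is at most the Hausdorff distance between H and H' with respect to d_{ℓ,η}, where the Hausdorff distance is expressed as inf over correspondences R ∈ C(H,H') of sup_{(h,h')∈R} d_{ℓ,η}(h,h'). -/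
/-!
The diagonal coupling `z ↦ (z, z)` of `η` with itself is admissible in the definition of the
Risk distance, and under it the risk distortion of any correspondence `R ∈ C(H, H')` is exactly
`sup_{(h,h') ∈ R} d_{ℓ,η}(h, h')`.
-/

open MeasureTheory
open scoped ENNReal NNReal

theorem Measurable.eabs {α : Type*} [MeasurableSpace α] {f g : α → ℝ≥0∞}
    (hf : Measurable f) (hg : Measurable g) : Measurable fun a => eabs (f a) (g a) :=
  (hf.sub hg).sup (hg.sub hf)

theorem MeasureTheory.Measure.fst_map_diag {α : Type*} [MeasurableSpace α] (μ : Measure α) :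
    (μ.map fun a => (a, a)).fst = μ :=
  (Measure.fst_map_prodMk measurable_id).trans Measure.map_id

theorem MeasureTheory.Measure.snd_map_diag {α : Type*} [MeasurableSpace α] (μ : Measure α) :
    (μ.map fun a => (a, a)).snd = μ :=
  (Measure.snd_map_prodMk measurable_id).trans Measure.map_id

section

variable {X Y X' Y' : Type*} [MeasurableSpace X] [MeasurableSpace Y]
  [MeasurableSpace X'] [MeasurableSpace Y']

theorem riskDist_le_of_coupling {η : Measure (X × Y)} {ℓ : Y → Y → ℝ≥0} {H : Set (X → Y)}
    {η' : Measure (X' × Y')} {ℓ' : Y' → Y' → ℝ≥0} {H' : Set (X' → Y')}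
    (γ : Measure ((X × Y) × (X' × Y'))) (hγ : γ.fst = η) (hγ' : γ.snd = η')
    (R : Set ((X → Y) × (X' → Y')))
    (hR : (∀ p ∈ R, p.1 ∈ H ∧ p.2 ∈ H') ∧ (∀ h ∈ H, ∃ h' ∈ H', (h, h') ∈ R) ∧
      ∀ h' ∈ H', ∃ h ∈ H, (h, h') ∈ R) :
    riskDist η ℓ H η' ℓ' H' ≤
      ⨆ p ∈ R, ∫⁻ z, eabs (ℓ (p.1 z.1.1) z.1.2) (ℓ' (p.2 z.2.1) z.2.2) ∂γ :=
  iInf₂_le_of_le γ ⟨hγ, hγ'⟩ (iInf₂_le R hR)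

theorem Measurable.loss {ℓ : Y → Y → ℝ≥0} (hℓ : Measurable (Function.uncurry ℓ))
    {h : X → Y} (hh : Measurable h) : Measurable fun z : X × Y => (ℓ (h z.1) z.2 : ℝ≥0∞) :=
  (hℓ.comp ((hh.comp measurable_fst).prodMk measurable_snd)).coe_nnreal_ennreal

theorem lintegral_eabs_loss_map_diag (η : Measure (X × Y)) {ℓ : Y → Y → ℝ≥0}
    (hℓ : Measurable (Function.uncurry ℓ)) {h h' : X → Y} (hh : Measurable h)
    (hh' : Measurable h') :
    ∫⁻ z, eabs (ℓ (h z.1.1) z.1.2) (ℓ (h' z.2.1) z.2.2) ∂(η.map fun z => (z, z)) =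
      ∫⁻ z, eabs (ℓ (h z.1) z.2) (ℓ (h' z.1) z.2) ∂η :=
  lintegral_map (((hℓ.loss hh).comp measurable_fst).eabs ((hℓ.loss hh').comp measurable_snd))
    (measurable_id.prodMk measurable_id)

end

theorem riskDist_le_hausdorff_predictors_general {X Y : Type*}
    [MeasurableSpace X]
    [MeasurableSpace Y]
    (η : Measure (X × Y)) (ℓ : Y → Y → ℝ≥0) (H H' : Set (X → Y))
    (hP : IsProblem η ℓ H) (hP' : IsProblem η ℓ H') :
    riskDist η ℓ H η ℓ H' ≤
      ⨅ (R : Set ((X → Y) × (X → Y)))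
          (_ : (∀ p ∈ R, p.1 ∈ H ∧ p.2 ∈ H') ∧ (∀ h ∈ H, ∃ h' ∈ H', (h, h') ∈ R) ∧
            ∀ h' ∈ H', ∃ h ∈ H, (h, h') ∈ R),
        ⨆ p ∈ R, ∫⁻ z, eabs (ℓ (p.1 z.1) z.2) (ℓ (p.2 z.1) z.2) ∂η := by
  refine le_iInf₂ fun R hR => ?_
  calc riskDist η ℓ H η ℓ H'
      ≤ ⨆ p ∈ R, ∫⁻ z, eabs (ℓ (p.1 z.1.1) z.1.2) (ℓ (p.2 z.2.1) z.2.2)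
          ∂(η.map fun z => (z, z)) :=
        riskDist_le_of_coupling _ (Measure.fst_map_diag η) (Measure.snd_map_diag η) R hR
    _ = ⨆ p ∈ R, ∫⁻ z, eabs (ℓ (p.1 z.1) z.2) (ℓ (p.2 z.1) z.2) ∂η :=
        iSup_congr fun p => iSup_congr fun hp => lintegral_eabs_loss_map_diag η hP.2.1
          (hP.2.2.1 _ (hR.1 p hp).1) (hP'.2.2.1 _ (hR.1 p hp).2)

/-- Stability under modification of the predictor set: if `P = (X,Y,η,ℓ,H)` and
`P' = (X,Y,η,ℓ,H')` differ only in their predictor sets, then `d_R(P,P')` is at most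
the Hausdorff distance between `H` and `H'` with respect to the pseudometric
`d_{ℓ,η}(h,h') = ∫ |ℓ(h(x),y) - ℓ(h'(x),y)| dη`, expressed as the infimum over
correspondences `R ∈ C(H,H')` of `sup_{(h,h')∈R} d_{ℓ,η}(h,h')`. -/
theorem riskDist_le_hausdorff_predictors {X Y : Type*}
    [MeasurableSpace X] [TopologicalSpace X] [PolishSpace X] [BorelSpace X]
    [MeasurableSpace Y] [TopologicalSpace Y] [PolishSpace Y] [BorelSpace Y]
    (η : Measure (X × Y)) (ℓ : Y → Y → ℝ≥0) (H H' : Set (X → Y))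
    (hP : IsProblem η ℓ H) (hP' : IsProblem η ℓ H') :
    riskDist η ℓ H η ℓ H' ≤
      ⨅ (R : Set ((X → Y) × (X → Y)))
          (_ : (∀ p ∈ R, p.1 ∈ H ∧ p.2 ∈ H') ∧ (∀ h ∈ H, ∃ h' ∈ H', (h, h') ∈ R) ∧
            ∀ h' ∈ H', ∃ h ∈ H, (h, h') ∈ R),
        ⨆ p ∈ R, ∫⁻ z, eabs (ℓ (p.1 z.1) z.2) (ℓ (p.2 z.1) z.2) ∂η :=
  riskDist_le_hausdorff_predictors_general η ℓ H H' hP hP'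
end
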